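/- Let G and H be finite connected graphs such that H_SR is bipartite and has a perfect matching. Suppose that every connected component of G_SR is Hamiltonian or has a perfect matching. Then the strong resolving graph (G □ H)_SR is bipartite and has a perfect matching. -/

import Mathlib

open SimpleGraph

variable {V : Type*}

/-- `u` is maximally distant from `v` in `G`: every neighbor `w` of `u`
satisfies `d(v,w) ≤ d(v,u)`. -/
def MaxDistant (G : SimpleGraph V) (u v : V) : Prop :=
  ∀ w, G.Adj u w → G.dist v w ≤ G.dist v u

/-- `u` and `v` are mutually maximally distant in `G`. -/
def MMD (G : SimpleGraph V) (u v : V) : Prop :=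
  MaxDistant G u v ∧ MaxDistant G v u

/-- The boundary of `G`: vertices maximally distant from some vertex. -/
def boundary (G : SimpleGraph V) : Set V := {u | ∃ v, MaxDistant G u v}

/-- The strong resolving graph on the whole vertex set (`G_{SR+I}`):
two vertices are adjacent iff they are distinct and mutually maximally distant. -/
def srGraphI (G : SimpleGraph V) : SimpleGraph V where
  Adj u v := u ≠ v ∧ MMD G u v
  symm := by
    constructor
    rintro u v ⟨hne, h1, h2⟩
    exact ⟨hne.symm, h2, h1⟩
  loopless := by
    constructor
    rintro u ⟨hne, _⟩
    exact hne rfl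

/-- The strong resolving graph `G_SR`, with vertex set the boundary of `G`. -/
def srGraph (G : SimpleGraph V) : SimpleGraph (boundary G) :=
  (srGraphI G).induce (boundary G)

/-- `u` and `v` are true twins: distinct vertices with equal closed neighborhoods. -/
def TrueTwins (G : SimpleGraph V) (u v : V) : Prop :=
  u ≠ v ∧ insert u (G.neighborSet u) = insert v (G.neighborSet v)

/-- `u` and `v` are false twins: distinct vertices with equal open neighborhoods. -/
def FalseTwins (G : SimpleGraph V) (u v : V) : Prop :=
  u ≠ v ∧ G.neighborSet u = G.neighborSet v

/-- A vertex is simplicial if its neighborhood induces a complete graph. -/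
def IsSimplicial (G : SimpleGraph V) (v : V) : Prop :=
  ∀ a b, G.Adj v a → G.Adj v b → a ≠ b → G.Adj a b

/-- `w` strongly resolves `u` and `v`. -/
def StronglyResolves (G : SimpleGraph V) (w u v : V) : Prop :=
  G.dist w u = G.dist w v + G.dist v u ∨ G.dist w v = G.dist w u + G.dist u v

/-- `S` is a strong metric generator for `G`. -/
def IsStrongMetricGenerator (G : SimpleGraph V) (S : Set V) : Prop :=
  ∀ u v : V, u ≠ v → ∃ w ∈ S, StronglyResolves G w u v

/-- The strong metric dimension of `G`. -/
noncomputable def sdim (G : SimpleGraph V) : ℕ :=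
  sInf {n | ∃ S : Set V, S.ncard = n ∧ IsStrongMetricGenerator G S}

/-- `S` is a vertex cover of `H`. -/
def IsVertexCover (H : SimpleGraph V) (S : Set V) : Prop :=
  ∀ u v : V, H.Adj u v → u ∈ S ∨ v ∈ S

/-- The vertex cover number of `H`. -/
noncomputable def vertexCoverNumber (H : SimpleGraph V) : ℕ :=
  sInf {n | ∃ S : Set V, S.ncard = n ∧ _root_.IsVertexCover H S}

/-- The graph `G*`: distinct vertices adjacent iff at distance at least two
or true twins. -/
def GStar (G : SimpleGraph V) : SimpleGraph V where
  Adj u v := u ≠ v ∧ (2 ≤ G.dist u v ∨ TrueTwins G u v)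
  symm := by
    constructor
    rintro u v ⟨hne, h | h⟩
    · exact ⟨hne.symm, Or.inl (by rwa [G.dist_comm])⟩
    · exact ⟨hne.symm, Or.inr ⟨h.1.symm, h.2.symm⟩⟩
  loopless := by
    constructor
    rintro u ⟨hne, _⟩
    exact hne rfl

/-- The direct (tensor) product of two graphs. -/
def DirectProd {α β : Type*} (G : SimpleGraph α) (H : SimpleGraph β) :
    SimpleGraph (α × β) where
  Adj x y := G.Adj x.1 y.1 ∧ H.Adj x.2 y.2
  symm := ⟨fun _ _ h => ⟨h.1.symm, h.2.symm⟩⟩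
  loopless := ⟨fun x h => G.loopless.irrefl x.1 h.1⟩

/-- The strong product of two graphs. -/
def StrongProd {α β : Type*} (G : SimpleGraph α) (H : SimpleGraph β) :
    SimpleGraph (α × β) where
  Adj x y := x ≠ y ∧ (x.1 = y.1 ∨ G.Adj x.1 y.1) ∧ (x.2 = y.2 ∨ H.Adj x.2 y.2)
  symm := by
    constructor
    rintro x y ⟨hne, h1, h2⟩
    exact ⟨hne.symm, h1.imp Eq.symm Adj.symm, h2.imp Eq.symm Adj.symm⟩
  loopless := by
    constructor
    rintro x ⟨hne, _⟩
    exact hne rfl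

/-- The Cartesian sum (disjunctive product) of two graphs. -/
def CartSum {α β : Type*} (G : SimpleGraph α) (H : SimpleGraph β) :
    SimpleGraph (α × β) where
  Adj x y := G.Adj x.1 y.1 ∨ H.Adj x.2 y.2
  symm := ⟨fun _ _ h => h.imp Adj.symm Adj.symm⟩
  loopless := ⟨fun x h => h.elim (G.loopless.irrefl x.1) (H.loopless.irrefl x.2)⟩

/-- The lexicographic product of two graphs. -/
def LexProd {α β : Type*} (G : SimpleGraph α) (H : SimpleGraph β) :
    SimpleGraph (α × β) where
  Adj x y := G.Adj x.1 y.1 ∨ (x.1 = y.1 ∧ H.Adj x.2 y.2)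
  symm := ⟨fun _ _ h => h.imp Adj.symm (fun h => ⟨h.1.symm, h.2.symm⟩)⟩
  loopless := ⟨fun x h => h.elim (G.loopless.irrefl x.1) (fun h => H.loopless.irrefl x.2 h.2)⟩

/-- The disjoint union of `n` copies of the complete graph on `m` vertices. -/
def CopiesComplete (n m : ℕ) : SimpleGraph (Fin n × Fin m) where
  Adj x y := x.1 = y.1 ∧ x.2 ≠ y.2
  symm := ⟨fun _ _ h => ⟨h.1.symm, h.2.symm⟩⟩
  loopless := ⟨fun x h => h.2 rfl⟩

/-- Every pair of vertices lies on a common cycle of length five. -/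
def C5Connected (G : SimpleGraph V) : Prop :=
  ∀ u v : V, ∃ (w : V) (c : G.Walk w w), c.IsCycle ∧ c.length = 5 ∧
    u ∈ c.support ∧ v ∈ c.support

attribute [local instance] Classical.propDecidable

/-!
Distances in `G □ H` add coordinatewise, so `(a, b)` is maximally distant from `(c, d)` exactly
when `a` is maximally distant from `c` and `b` from `d`. Hence `∂(G □ H) = ∂G × ∂H` and MMD pairs
are the coordinatewise MMD pairs. Orienting the Hamiltonian cycles and using the perfect matchings
of the components of `G_SR` gives a permutation `φ` of `∂G` moving every vertex to an MMD partner;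
the perfect matching of `H_SR` is a fixed-point-free involution `m`, and a 2-colouring `c` of
`H_SR` satisfies `c (m b) ≠ c b`. The map `(a, b) ↦ (φ^{±1} a, m b)`, with the sign chosen by
`c b`, is then a fixed-point-free involution along edges of `(G □ H)_SR`, i.e. a perfect matching,
and `(a, b) ↦ c b` is a proper 2-colouring, as MMD vertices of `G □ H` have distinct
`H`-coordinates.
-/

namespace SimpleGraph

variable {γ : Type*} {Γ : SimpleGraph γ}

theorem Walk.IsHamiltonianCycle.exists_perm_adj [DecidableEq γ] {a : γ} {p : Γ.Walk a a}
    (hp : p.IsHamiltonianCycle) : ∃ σ : Equiv.Perm γ, ∀ x, Γ.Adj x (σ x) := by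
  obtain ⟨n, hn⟩ : ∃ n, p.tail.support.length = n + 1 := ⟨_, Walk.length_support _⟩
  have hlen : p.length = n + 1 := by
    rw [← Walk.length_tail_add_one hp.not_nil, ← Walk.length_support, hn]
  obtain ⟨e, he⟩ : ∃ e : Fin (n + 1) ≃ γ, ∀ j, e j = p.getVert (j + 1) :=
    ⟨(finCongr hn).symm.trans hp.isHamiltonian_tail.getVertEquiv, fun j => by simp⟩
  refine ⟨e.symm.trans ((finRotate _).trans e), e.surjective.forall.mpr fun j => ?_⟩
  rw [Equiv.trans_apply, Equiv.trans_apply, Equiv.symm_apply_apply, he, he]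
  rcases Fin.eq_castSucc_or_eq_last j with ⟨i, rfl⟩ | rfl
  · rw [finRotate_apply, Fin.coeSucc_eq_succ, Fin.val_succ, Fin.val_castSucc]
    exact p.adj_getVert_succ (by omega)
  · rw [finRotate_last, Fin.val_last, Fin.val_zero, ← hlen, Walk.getVert_length]
    simpa using p.adj_getVert_succ (i := 0) (by omega)

theorem IsHamiltonian.exists_perm_adj [Fintype γ] [DecidableEq γ] [Nontrivial γ]
    (h : Γ.IsHamiltonian) : ∃ σ : Equiv.Perm γ, ∀ x, Γ.Adj x (σ x) :=
  let ⟨_, _, hp⟩ := h Fintype.one_lt_card.ne'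
  hp.exists_perm_adj

theorem ConnectedComponent.nontrivial_supp (h : ∀ x, ∃ y, Γ.Adj x y)
    (c : Γ.ConnectedComponent) : Nontrivial c.supp := by
  obtain ⟨x, rfl⟩ := c.exists_rep
  obtain ⟨y, hxy⟩ := h x
  exact ⟨⟨x, rfl⟩, ⟨y, (ConnectedComponent.connectedComponentMk_eq_of_adj hxy).symm⟩,
    fun h => hxy.ne (congrArg Subtype.val h)⟩

theorem Subgraph.IsPerfectMatching.exists_involutive_adj {M : Γ.Subgraph}
    (hM : M.IsPerfectMatching) : ∃ m : γ → γ, Function.Involutive m ∧ ∀ x, Γ.Adj x (m x) := by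
  choose m hm hmu using Subgraph.isPerfectMatching_iff.mp hM
  exact ⟨m, fun x => (hmu (m x) x (hm x).symm).symm, fun x => M.adj_sub (hm x)⟩

theorem exists_isPerfectMatching_of_involutive {m : γ → γ} (hm : Function.Involutive m)
    (hadj : ∀ x, Γ.Adj x (m x)) : ∃ M : Γ.Subgraph, M.IsPerfectMatching := by
  refine ⟨{ verts := Set.univ
            Adj := fun x y => y = m x
            adj_sub := ?_
            edge_vert := fun _ => Set.mem_univ _
            symm := ⟨fun x y h => by rw [h, hm]⟩ }, ?_⟩
  · rintro x _ rfl
    exact hadj x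
  · exact Subgraph.isPerfectMatching_iff.mpr fun x => existsUnique_eq

theorem exists_perm_adj_of_forall_connectedComponent
    (h : ∀ c : Γ.ConnectedComponent, ∃ σ : Equiv.Perm c.supp, ∀ x : c.supp, Γ.Adj x (σ x)) :
    ∃ σ : Equiv.Perm γ, ∀ x, Γ.Adj x (σ x) := by
  choose σ hσ using h
  exact ⟨Equiv.ofFiberEquiv σ, fun x => hσ _ ⟨x, rfl⟩⟩

end SimpleGraph

section MaxDistant

variable {α : Type*} {G : SimpleGraph α}

theorem MMD.symm {u v : α} (h : MMD G u v) : MMD G v u := ⟨h.2, h.1⟩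

theorem not_maxDistant_self_of_adj {u w : α} (h : G.Adj u w) : ¬ MaxDistant G u u := by
  intro hu
  simpa [dist_eq_one_iff_adj.mpr h] using hu w h

/-- The farthest vertex `w` among those from which `u` is maximally distant is in turn
maximally distant from `u`: a neighbour of `w` farther from `u` would be a better choice. -/
theorem exists_mmd_ne_of_mem_boundary [Finite α] (hG : G.Connected) {u n : α}
    (hu : u ∈ boundary G) (hn : G.Adj u n) : ∃ w, w ≠ u ∧ MMD G u w := by
  obtain ⟨w, hwu, hmax⟩ := Set.exists_max_image {x | MaxDistant G u x}
      (fun x => G.dist u x) (Set.toFinite _) hu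
  refine ⟨w, fun h => not_maxDistant_self_of_adj hn (h ▸ hwu), hwu, fun y hwy => ?_⟩
  by_contra! hlt
  have hy : G.dist u y = G.dist u w + 1 := by
    have := hG.dist_triangle (u := u) (v := w) (w := y)
    rw [dist_eq_one_iff_adj.mpr hwy] at this
    omega
  have huy : MaxDistant G u y := fun z hz =>
    calc G.dist y z ≤ G.dist y w + G.dist w z := hG.dist_triangle
      _ ≤ 1 + G.dist w u := by rw [dist_eq_one_iff_adj.mpr hwy.symm]; grind [MaxDistant]
      _ = G.dist y u := by rw [G.dist_comm (u := y), hy, add_comm, G.dist_comm]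
  have := hmax y huy
  omega

theorem exists_perm_mmd [Fintype α] (hG : G.Connected)
    (hcomp : ∀ c : (srGraph G).ConnectedComponent,
      ((srGraph G).induce c.supp).IsHamiltonian ∨
        ∃ M : ((srGraph G).induce c.supp).Subgraph, M.IsPerfectMatching) :
    ∃ φ : Equiv.Perm (boundary G), ∀ x : boundary G, MMD G x (φ x) := by
  rcases subsingleton_or_nontrivial α with hα | hα
  · have hbot : ∀ u w : α, ¬ G.Adj u w := fun u w h => h.ne (Subsingleton.elim u w)
    exact ⟨1, fun x => ⟨fun w h => (hbot _ _ h).elim, fun w h => (hbot _ _ h).elim⟩⟩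
  have hpartner : ∀ x, ∃ y, (srGraph G).Adj x y := fun x => by
    obtain ⟨n, hn⟩ := hG.preconnected.exists_adj_of_nontrivial x.1
    obtain ⟨w, hwx, hmmd⟩ := exists_mmd_ne_of_mem_boundary hG x.2 hn
    exact ⟨⟨w, x, hmmd.2⟩, hwx.symm, hmmd⟩
  obtain ⟨φ, hφ⟩ := SimpleGraph.exists_perm_adj_of_forall_connectedComponent fun c => by
    rcases hcomp c with hham | ⟨M, hM⟩
    · have := c.nontrivial_supp hpartner
      exact hham.exists_perm_adj
    · obtain ⟨m, hm, hmadj⟩ := hM.exists_involutive_adj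
      exact ⟨hm.toPerm m, hmadj⟩
  exact ⟨φ, fun x => (hφ x).2⟩

end MaxDistant

section BoxProd

variable {α β : Type*} {G : SimpleGraph α} {H : SimpleGraph β}

theorem SimpleGraph.dist_boxProd (hG : G.Connected) (hH : H.Connected) (x y : α × β) :
    (G □ H).dist x y = G.dist x.1 y.1 + H.dist x.2 y.2 := by
  have h := edist_boxProd (G := G) (H := H) x y
  rw [← (hG x.1 y.1).coe_dist_eq_edist, ← (hH x.2 y.2).coe_dist_eq_edist,
    ← (hG.boxProd hH x y).coe_dist_eq_edist] at h
  exact_mod_cast h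

theorem maxDistant_boxProd_iff (hG : G.Connected) (hH : H.Connected) {x y : α × β} :
    MaxDistant (G □ H) x y ↔ MaxDistant G x.1 y.1 ∧ MaxDistant H x.2 y.2 := by
  simp only [MaxDistant, SimpleGraph.dist_boxProd hG hH]
  refine ⟨fun h => ⟨fun w hw => ?_, fun w hw => ?_⟩, ?_⟩
  · simpa using h (w, x.2) (boxProd_adj.mpr (Or.inl ⟨hw, rfl⟩))
  · simpa using h (x.1, w) (boxProd_adj.mpr (Or.inr ⟨hw, rfl⟩))
  · rintro ⟨h1, h2⟩ w (⟨hw, he⟩ | ⟨hw, he⟩)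
    · rw [← he]
      exact Nat.add_le_add_right (h1 _ hw) _
    · rw [← he]
      exact Nat.add_le_add_left (h2 _ hw) _

theorem boundary_boxProd (hG : G.Connected) (hH : H.Connected) :
    boundary (G □ H) = boundary G ×ˢ boundary H := by
  ext x
  simp only [boundary, Set.mem_ofPred_eq, Set.mem_prod, Prod.exists, maxDistant_boxProd_iff hG hH,
    exists_and_exists_comm]

theorem mmd_boxProd_iff (hG : G.Connected) (hH : H.Connected) {x y : α × β} :
    MMD (G □ H) x y ↔ MMD G x.1 y.1 ∧ MMD H x.2 y.2 := by
  simp only [MMD, maxDistant_boxProd_iff hG hH]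
  tauto

def boundaryBoxProdEquiv (hG : G.Connected) (hH : H.Connected) :
    boundary (G □ H) ≃ boundary G × boundary H :=
  (Equiv.setCongr (boundary_boxProd hG hH)).trans (Equiv.Set.prod _ _)

@[simp]
theorem coe_boundaryBoxProdEquiv_fst (hG : G.Connected) (hH : H.Connected)
    (x : boundary (G □ H)) : ((boundaryBoxProdEquiv hG hH x).1 : α) = x.1.1 := rfl

@[simp]
theorem coe_boundaryBoxProdEquiv_snd (hG : G.Connected) (hH : H.Connected)
    (x : boundary (G □ H)) : ((boundaryBoxProdEquiv hG hH x).2 : β) = x.1.2 := rfl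

theorem colorable_srGraph_boxProd (hG : G.Connected) (hH : H.Connected)
    (hSR : ∀ b, ∃ b', (srGraph H).Adj b b') {n : ℕ} (h : (srGraph H).Colorable n) :
    (srGraph (G □ H)).Colorable n := by
  refine .of_hom ⟨fun x => (boundaryBoxProdEquiv hG hH x).2, fun {x y} hxy => ?_⟩ h
  have hmmd := ((mmd_boxProd_iff hG hH).mp hxy.2).2
  refine ⟨fun hxy₂ => ?_, hmmd⟩
  obtain ⟨b, hb⟩ := hSR (boundaryBoxProdEquiv hG hH x).2
  have : Nontrivial β := ⟨⟨_, _, hb.1⟩⟩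
  obtain ⟨w, hw⟩ := hH.preconnected.exists_adj_of_nontrivial x.1.2
  have hyx : y.1.2 = x.1.2 := hxy₂.symm
  exact not_maxDistant_self_of_adj hw (hyx ▸ hmmd.1)

def twistedProdMap {γ δ : Type*} (φ : Equiv.Perm γ) (m : δ → δ) (p : δ → Prop) [DecidablePred p]
    (x : γ × δ) : γ × δ :=
  (if p x.2 then φ x.1 else φ.symm x.1, m x.2)

theorem involutive_twistedProdMap {γ δ : Type*} (φ : Equiv.Perm γ) {m : δ → δ}
    (hm : Function.Involutive m) {p : δ → Prop} [DecidablePred p] (hp : ∀ b, p (m b) ↔ ¬ p b) :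
    Function.Involutive (twistedProdMap φ m p) := by
  rintro ⟨a, b⟩
  by_cases h : p b <;> simp [twistedProdMap, h, hp, hm b]

theorem exists_involutive_adj_srGraph_boxProd (hG : G.Connected) (hH : H.Connected)
    {φ : Equiv.Perm (boundary G)} (hφ : ∀ x : boundary G, MMD G x (φ x))
    {m : boundary H → boundary H} (hm : Function.Involutive m)
    (hmadj : ∀ b, (srGraph H).Adj b (m b)) (c : (srGraph H).Coloring (Fin 2)) :
    ∃ F, Function.Involutive F ∧ ∀ x, (srGraph (G □ H)).Adj x (F x) := by
  set e := boundaryBoxProdEquiv hG hH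
  have hΦ := involutive_twistedProdMap φ hm (p := fun b => c b = 0)
    fun b => by have := c.valid (hmadj b); omega
  refine ⟨e.symm ∘ twistedProdMap φ m (fun b => c b = 0) ∘ e, fun x => by simp [hΦ (e x)],
    fun x => ?_⟩
  obtain ⟨y, hy⟩ : ∃ y, e y = twistedProdMap φ m (fun b => c b = 0) (e x) :=
    ⟨_, e.apply_symm_apply _⟩
  rw [Function.comp_apply, Function.comp_apply, ← hy, e.symm_apply_apply]
  have hfst : MMD G (e x).1 (e y).1 := by
    rw [hy, twistedProdMap]
    split_ifs
    · exact hφ _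
    · simpa using (hφ (φ.symm (e x).1)).symm
  have hsnd : (srGraph H).Adj (e x).2 (e y).2 := hy ▸ hmadj _
  exact ⟨fun h => hsnd.1 (congrArg Prod.snd h), (mmd_boxProd_iff hG hH).mpr ⟨hfst, hsnd.2⟩⟩

end BoxProd

theorem stmt13_general {α β : Type*} [Fintype α]
    (G : SimpleGraph α) (H : SimpleGraph β)
    (hG : G.Connected) (hH : H.Connected)
    (hHbip : (srGraph H).Colorable 2)
    (hHpm : ∃ M : (srGraph H).Subgraph, M.IsPerfectMatching)
    (hcomp : ∀ c : (srGraph G).ConnectedComponent,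
      ((srGraph G).induce c.supp).IsHamiltonian ∨
        ∃ M : ((srGraph G).induce c.supp).Subgraph, M.IsPerfectMatching) :
    (srGraph (G □ H)).Colorable 2 ∧
      ∃ M : (srGraph (G □ H)).Subgraph, M.IsPerfectMatching := by
  obtain ⟨M, hM⟩ := hHpm
  obtain ⟨m, hm, hmadj⟩ := hM.exists_involutive_adj
  obtain ⟨φ, hφ⟩ := exists_perm_mmd hG hcomp
  obtain ⟨F, hF, hFadj⟩ :=
    exists_involutive_adj_srGraph_boxProd hG hH hφ hm hmadj hHbip.some
  exact ⟨colorable_srGraph_boxProd hG hH (fun b => ⟨m b, hmadj b⟩) hHbip,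
    SimpleGraph.exists_isPerfectMatching_of_involutive hF hFadj⟩

theorem stmt13 {α β : Type*} [Fintype α] [Fintype β]
    (G : SimpleGraph α) (H : SimpleGraph β)
    (hG : G.Connected) (hH : H.Connected)
    (hHbip : (srGraph H).Colorable 2)
    (hHpm : ∃ M : (srGraph H).Subgraph, M.IsPerfectMatching)
    (hcomp : ∀ c : (srGraph G).ConnectedComponent,
      ((srGraph G).induce c.supp).IsHamiltonian ∨
        ∃ M : ((srGraph G).induce c.supp).Subgraph, M.IsPerfectMatching) :
    (srGraph (G □ H)).Colorable 2 ∧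
      ∃ M : (srGraph (G □ H)).Subgraph, M.IsPerfectMatching :=
  stmt13_general G H hG hH hHbip hHpm hcomp
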